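/- There is a chain of primitive isometric embeddings of even lattices L ↪ L' ↪ L'' ↪ L''', where L = H ⊕ E₈(−1) ⊕ A₁(−1)^{⊕6} (rank 16), L' = H ⊕ E₈(−1) ⊕ D₄(−1) ⊕ A₁(−1)^{⊕3} (rank 17), L'' = H ⊕ E₈(−1) ⊕ D₆(−1) ⊕ A₁(−1)^{⊕2} (rank 18), and L''' = H ⊕ E₈(−1) ⊕ E₇(−1) ⊕ A₁(−1)^{⊕2} (rank 19). That is, for each consecutive pair there exists an injective ℤ-linear map ι: ℤ^N → ℤ^{N+1} satisfying (ιx)ᵀ G' (ιy) = xᵀ G y for all x, y ∈ ℤ^N (where G, G' are the respective block-diagonal Gram matrices) and whose cokernel ℤ^{N+1}/ι(ℤ^N) is torsion-free. -/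

import Mathlib

open Matrix

/-- Square integer matrices of size `n`. -/
abbrev IntMat (n : ℕ) := Matrix (Fin n) (Fin n) ℤ

/-- Block-diagonal (orthogonal) direct sum of Gram matrices. -/
def dsum {m n : ℕ} (A : IntMat m) (B : IntMat n) : IntMat (m + n) :=
  Matrix.reindex finSumFinEquiv finSumFinEquiv (Matrix.fromBlocks A 0 0 B)

infixl:65 " ⊕ₘ " => dsum

/-- Gram matrix of the hyperbolic plane `H`. -/
def HypMat : IntMat 2 := !![0, 1; 1, 0]

/-- The standard Cartan matrix of the root system `Aₙ`. -/
def CartanA (n : ℕ) : IntMat n :=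
  Matrix.of fun i j =>
    if i = j then 2 else if (i : ℕ) + 1 = j ∨ (j : ℕ) + 1 = i then -1 else 0

/-- The standard Cartan matrix of the root system `Dₙ` (`n ≥ 3`): a chain on the
nodes `0, …, n-2` together with the node `n-1` attached to the node `n-3`. -/
def CartanD (n : ℕ) : IntMat n :=
  Matrix.of fun i j =>
    if i = j then 2
    else if ((i : ℕ) + 1 = j ∨ (j : ℕ) + 1 = i) ∧ (i : ℕ) + 1 ≠ n ∧ (j : ℕ) + 1 ≠ n then -1
    else if ((i : ℕ) + 3 = n ∧ (j : ℕ) + 1 = n) ∨ ((j : ℕ) + 3 = n ∧ (i : ℕ) + 1 = n) then -1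
    else 0

/-- The standard Cartan matrix of the root system `E₇`: a chain on the nodes
`0, …, 5` with the node `6` attached to the node `2`. -/
def CartanE₇ : IntMat 7 :=
  !![ 2, -1,  0,  0,  0,  0,  0;
     -1,  2, -1,  0,  0,  0,  0;
      0, -1,  2, -1,  0,  0, -1;
      0,  0, -1,  2, -1,  0,  0;
      0,  0,  0, -1,  2, -1,  0;
      0,  0,  0,  0, -1,  2,  0;
      0,  0, -1,  0,  0,  0,  2]

/-- The standard Cartan matrix of the root system `E₈`: a chain on the nodes
`0, …, 6` with the node `7` attached to the node `2`. -/
def CartanE₈ : IntMat 8 :=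
  !![ 2, -1,  0,  0,  0,  0,  0,  0;
     -1,  2, -1,  0,  0,  0,  0,  0;
      0, -1,  2, -1,  0,  0,  0, -1;
      0,  0, -1,  2, -1,  0,  0,  0;
      0,  0,  0, -1,  2, -1,  0,  0;
      0,  0,  0,  0, -1,  2, -1,  0;
      0,  0,  0,  0,  0, -1,  2,  0;
      0,  0, -1,  0,  0,  0,  0,  2]

/-- Two integral lattices given by Gram matrices `G₁, G₂` of rank `N` are isometric:
there is `P ∈ GL(N, ℤ)` with `Pᵀ G₁ P = G₂`. -/
def LatticeIsometric {N : ℕ} (G₁ G₂ : IntMat N) : Prop :=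
  ∃ P : IntMat N, (P.det = 1 ∨ P.det = -1) ∧ Pᵀ * G₁ * P = G₂

/-- A primitive isometric embedding between the integral lattices with Gram matrices
`G` (rank `M`) and `G'` (rank `N`): an injective `ℤ`-linear map preserving the
bilinear forms whose cokernel is torsion-free. -/
def PrimitiveIsometricEmbedding {M N : ℕ} (G : IntMat M) (G' : IntMat N) : Prop :=
  ∃ ι : (Fin M → ℤ) →ₗ[ℤ] (Fin N → ℤ),
    Function.Injective ι ∧
    (∀ x y : Fin M → ℤ, dotProduct (ι x) (G'.mulVec (ι y)) =
      dotProduct x (G.mulVec y)) ∧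
    NoZeroSMulDivisors ℤ ((Fin N → ℤ) ⧸ LinearMap.range ι)

/-- Gram matrix of `L = H ⊕ E₈(-1) ⊕ A₁(-1)^{⊕6}` (rank 16). -/
def GramL : IntMat 16 :=
  HypMat ⊕ₘ (-CartanE₈) ⊕ₘ (-CartanA 1) ⊕ₘ (-CartanA 1) ⊕ₘ (-CartanA 1) ⊕ₘ (-CartanA 1)
    ⊕ₘ (-CartanA 1) ⊕ₘ (-CartanA 1)

/-- Gram matrix of `L' = H ⊕ E₈(-1) ⊕ D₄(-1) ⊕ A₁(-1)^{⊕3}` (rank 17). -/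
def GramL' : IntMat 17 :=
  HypMat ⊕ₘ (-CartanE₈) ⊕ₘ (-CartanD 4) ⊕ₘ (-CartanA 1) ⊕ₘ (-CartanA 1) ⊕ₘ (-CartanA 1)

/-- Gram matrix of `L'' = H ⊕ E₈(-1) ⊕ D₆(-1) ⊕ A₁(-1)^{⊕2}` (rank 18). -/
def GramL'' : IntMat 18 :=
  HypMat ⊕ₘ (-CartanE₈) ⊕ₘ (-CartanD 6) ⊕ₘ (-CartanA 1) ⊕ₘ (-CartanA 1)

/-- Gram matrix of `L''' = H ⊕ E₈(-1) ⊕ E₇(-1) ⊕ A₁(-1)^{⊕2}` (rank 19). -/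
def GramL''' : IntMat 19 :=
  HypMat ⊕ₘ (-CartanE₈) ⊕ₘ (-CartanE₇) ⊕ₘ (-CartanA 1) ⊕ₘ (-CartanA 1)

/-! Each step is the identity on `H ⊕ E₈(-1)` and on the `A₁(-1)` summands that survive, and
on the remaining summands comes from an embedding of root lattices: the mutually orthogonal roots
`α₀`, `α₂` and the highest root `α₀ + 2α₁ + α₂ + α₃` give `A₁³ ⊂ D₄`; the roots `α₀, α₁, α₂`,
`α₂ + 2α₃ + α₄ + α₅` and `α₄` give `D₄ ⊕ A₁ ⊂ D₆`; and `D₆` is the Dynkin diagram of `E₇` with an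
end node removed. Each of these embeddings has an integral left inverse `C`, and an isometric
embedding `B` with an integral left inverse is primitive: if `c • v = B u` then
`c • v = c • B (C v)`, so `v = B (C v)`. -/

def dsumRect {m m' n n' : ℕ} (A : Matrix (Fin m') (Fin m) ℤ) (B : Matrix (Fin n') (Fin n) ℤ) :
    Matrix (Fin (m' + n')) (Fin (m + n)) ℤ :=
  Matrix.reindex finSumFinEquiv finSumFinEquiv (Matrix.fromBlocks A 0 0 B)

section dsumRect

variable {l l' m m' n n' : ℕ}

theorem dsumRect_eq_dsum (A : IntMat m) (B : IntMat n) : dsumRect A B = A ⊕ₘ B := rfl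

theorem dsumRect_mul_dsumRect (A₁ : Matrix (Fin l) (Fin m) ℤ) (A₂ : Matrix (Fin l') (Fin m') ℤ)
    (B₁ : Matrix (Fin m) (Fin n) ℤ) (B₂ : Matrix (Fin m') (Fin n') ℤ) :
    dsumRect A₁ A₂ * dsumRect B₁ B₂ = dsumRect (A₁ * B₁) (A₂ * B₂) := by
  simp only [dsumRect, reindex_apply, submatrix_mul_equiv, fromBlocks_multiply, Matrix.mul_zero,
    Matrix.zero_mul, add_zero, zero_add]

theorem transpose_dsumRect (A : Matrix (Fin m') (Fin m) ℤ) (B : Matrix (Fin n') (Fin n) ℤ) :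
    (dsumRect A B)ᵀ = dsumRect Aᵀ Bᵀ := by
  rw [dsumRect, dsumRect, transpose_reindex, fromBlocks_transpose, transpose_zero, transpose_zero]

theorem dsumRect_one : dsumRect (1 : IntMat m) (1 : IntMat n) = 1 := by
  rw [dsumRect, fromBlocks_one, reindex_apply, submatrix_one_equiv]

end dsumRect

theorem dsum_assoc_eq_submatrix {m n k : ℕ} (A : IntMat m) (B : IntMat n) (C : IntMat k) :
    A ⊕ₘ B ⊕ₘ C = (A ⊕ₘ (B ⊕ₘ C)).submatrix (finCongr (add_assoc m n k))
      (finCongr (add_assoc m n k)) := by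
  set e := finCongr (add_assoc m n k)
  have left (i : Fin m) : e (Fin.castAdd k (Fin.castAdd n i)) = Fin.castAdd (n + k) i := rfl
  have middle (i : Fin n) : e (Fin.castAdd k (Fin.natAdd m i)) = Fin.natAdd m (Fin.castAdd k i) :=
    rfl
  have right (i : Fin k) : e (Fin.natAdd (m + n) i) = Fin.natAdd m (Fin.natAdd n i) :=
    Fin.ext (add_assoc m n i)
  ext i j
  induction i using Fin.addCases with
  | left i => induction i using Fin.addCases <;>
    induction j using Fin.addCases with
    | left j => induction j using Fin.addCases <;> simp [dsum, left, middle]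
    | right j => simp [dsum, left, middle, right]
  | right i => induction j using Fin.addCases with
    | left j => induction j using Fin.addCases <;> simp [dsum, middle, left, right]
    | right j => simp [dsum, right]

theorem neg_dsum {m n : ℕ} (A : IntMat m) (B : IntMat n) : -(A ⊕ₘ B) = -A ⊕ₘ -B := by
  ext i j
  rw [dsum, dsum, neg_apply, reindex_apply, reindex_apply, submatrix_apply, submatrix_apply,
    ← neg_apply, fromBlocks_neg, neg_zero, neg_zero]

def SplitIsometricEmbedding {M N : ℕ} (G : IntMat M) (G' : IntMat N) : Prop :=
  ∃ (B : Matrix (Fin N) (Fin M) ℤ) (C : Matrix (Fin M) (Fin N) ℤ), C * B = 1 ∧ Bᵀ * G' * B = G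

namespace SplitIsometricEmbedding

variable {M N K : ℕ} {G : IntMat M} {G' : IntMat N} {G'' : IntMat K}

theorem primitiveIsometricEmbedding (h : SplitIsometricEmbedding G G') :
    PrimitiveIsometricEmbedding G G' := by
  obtain ⟨B, C, hCB, hG⟩ := h
  have hCB_vec (u : Fin M → ℤ) : C *ᵥ (B *ᵥ u) = u := by
    rw [mulVec_mulVec, hCB, one_mulVec]
  refine ⟨B.mulVecLin, Function.LeftInverse.injective hCB_vec, fun x y => ?_, ⟨fun {c v} h => ?_⟩⟩
  · rw [← hG, mulVecLin_apply, mulVecLin_apply, ← mulVec_mulVec, ← mulVec_mulVec,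
      dotProduct_mulVec x Bᵀ, vecMul_transpose]
  · obtain ⟨v, rfl⟩ := Submodule.Quotient.mk_surjective _ v
    rw [← Submodule.Quotient.mk_smul, Submodule.Quotient.mk_eq_zero] at h
    obtain ⟨u, hu⟩ := h
    rw [Submodule.Quotient.mk_eq_zero, or_iff_not_imp_left]
    intro hc
    have hv : c • B *ᵥ (C *ᵥ v) = c • v := by
      rw [← mulVec_smul, ← mulVec_smul, ← hu, mulVecLin_apply, hCB_vec]
    exact ⟨C *ᵥ v, smul_right_injective _ hc hv⟩

theorem refl (G : IntMat N) : SplitIsometricEmbedding G G :=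
  ⟨1, 1, mul_one 1, by rw [transpose_one, one_mul, mul_one]⟩

theorem trans (h₁ : SplitIsometricEmbedding G G') (h₂ : SplitIsometricEmbedding G' G'') :
    SplitIsometricEmbedding G G'' := by
  obtain ⟨B₁, C₁, hCB₁, hG₁⟩ := h₁
  obtain ⟨B₂, C₂, hCB₂, hG₂⟩ := h₂
  refine ⟨B₂ * B₁, C₁ * C₂, ?_, ?_⟩
  · rw [Matrix.mul_assoc, ← Matrix.mul_assoc C₂, hCB₂, Matrix.one_mul, hCB₁]
  · rw [transpose_mul, ← hG₁, ← hG₂]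
    simp only [Matrix.mul_assoc]

theorem of_submatrix_equiv (G : IntMat N) (e : Fin M ≃ Fin N) :
    SplitIsometricEmbedding (G.submatrix e e) G := by
  refine ⟨e.symm.toPEquiv.toMatrix, e.toPEquiv.toMatrix, ?_, ?_⟩
  · rw [← PEquiv.toMatrix_trans, ← Equiv.toPEquiv_trans, Equiv.self_trans_symm,
      Equiv.toPEquiv_refl, PEquiv.toMatrix_refl]
  · rw [← PEquiv.toMatrix_symm, ← Equiv.toPEquiv_symm, Equiv.symm_symm,
      PEquiv.toMatrix_toPEquiv_mul, PEquiv.mul_toMatrix_toPEquiv, submatrix_submatrix,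
      Equiv.symm_symm]
    rfl

theorem neg (h : SplitIsometricEmbedding G G') : SplitIsometricEmbedding (-G) (-G') := by
  obtain ⟨B, C, hCB, hG⟩ := h
  exact ⟨B, C, hCB, by rw [Matrix.mul_neg, Matrix.neg_mul, hG]⟩

variable {m m' n n' k : ℕ} {A : IntMat m} {A' : IntMat m'} {B : IntMat n} {B' : IntMat n'}

theorem dsum (hA : SplitIsometricEmbedding A A') (hB : SplitIsometricEmbedding B B') :
    SplitIsometricEmbedding (A ⊕ₘ B) (A' ⊕ₘ B') := by
  obtain ⟨P, Q, hQP, hA⟩ := hA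
  obtain ⟨R, S, hSR, hB⟩ := hB
  refine ⟨dsumRect P R, dsumRect Q S, ?_, ?_⟩
  · rw [dsumRect_mul_dsumRect, hQP, hSR, dsumRect_one]
  · rw [transpose_dsumRect, ← dsumRect_eq_dsum, dsumRect_mul_dsumRect, dsumRect_mul_dsumRect,
      hA, hB, dsumRect_eq_dsum]

theorem dsum_assoc (A : IntMat m) (B : IntMat n) (C : IntMat k) :
    SplitIsometricEmbedding (A ⊕ₘ B ⊕ₘ C) (A ⊕ₘ (B ⊕ₘ C)) := by
  rw [dsum_assoc_eq_submatrix]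
  exact of_submatrix_equiv _ _

end SplitIsometricEmbedding

-- The rows of each transposed matrix are the images of the simple roots in simple-root coordinates.
theorem splitIsometricEmbedding_A₁_A₁_A₁_D₄ :
    SplitIsometricEmbedding (CartanA 1 ⊕ₘ CartanA 1 ⊕ₘ CartanA 1) (CartanD 4) :=
  ⟨!![1, 0, 0, 0; 0, 0, 1, 0; 1, 2, 1, 1]ᵀ, !![1, 0, 0, -1; 0, 0, 1, -1; 0, 0, 0, 1],
    by decide, by decide⟩

theorem splitIsometricEmbedding_D₄_A₁_D₆ :
    SplitIsometricEmbedding (CartanD 4 ⊕ₘ CartanA 1) (CartanD 6) :=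
  ⟨!![1, 0, 0, 0, 0, 0; 0, 1, 0, 0, 0, 0; 0, 0, 1, 0, 0, 0; 0, 0, 1, 2, 1, 1; 0, 0, 0, 0, 1, 0]ᵀ,
    !![1, 0, 0, 0, 0, 0; 0, 1, 0, 0, 0, 0; 0, 0, 1, 0, 0, -1; 0, 0, 0, 0, 0, 1; 0, 0, 0, 0, 1, -1],
    by decide, by decide⟩

theorem splitIsometricEmbedding_D₆_E₇ : SplitIsometricEmbedding (CartanD 6) CartanE₇ :=
  ⟨!![0, 0, 0, 0, 0, 1, 0; 0, 0, 0, 0, 1, 0, 0; 0, 0, 0, 1, 0, 0, 0; 0, 0, 1, 0, 0, 0, 0;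
      0, 1, 0, 0, 0, 0, 0; 0, 0, 0, 0, 0, 0, 1]ᵀ,
    !![0, 0, 0, 0, 0, 1, 0; 0, 0, 0, 0, 1, 0, 0; 0, 0, 0, 1, 0, 0, 0; 0, 0, 1, 0, 0, 0, 0;
      0, 1, 0, 0, 0, 0, 0; 0, 0, 0, 0, 0, 0, 1],
    by decide, by decide⟩

open SplitIsometricEmbedding

theorem splitIsometricEmbedding_gramL_gramL' : SplitIsometricEmbedding GramL GramL' := by
  have h := splitIsometricEmbedding_A₁_A₁_A₁_D₄.neg
  rw [neg_dsum, neg_dsum] at h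
  have key : SplitIsometricEmbedding
      (HypMat ⊕ₘ -CartanE₈ ⊕ₘ -CartanA 1 ⊕ₘ -CartanA 1 ⊕ₘ -CartanA 1)
      (HypMat ⊕ₘ -CartanE₈ ⊕ₘ -CartanD 4) :=
    ((dsum_assoc _ _ _).dsum (refl _)).trans <| (dsum_assoc _ _ _).trans <| (refl _).dsum h
  exact ((key.dsum (refl _)).dsum (refl _)).dsum (refl _)

theorem splitIsometricEmbedding_gramL'_gramL'' : SplitIsometricEmbedding GramL' GramL'' := by
  have h := splitIsometricEmbedding_D₄_A₁_D₆.neg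
  rw [neg_dsum] at h
  exact (((dsum_assoc _ _ _).trans ((refl _).dsum h)).dsum (refl _)).dsum (refl _)

theorem splitIsometricEmbedding_gramL''_gramL''' : SplitIsometricEmbedding GramL'' GramL''' :=
  (((refl _).dsum splitIsometricEmbedding_D₆_E₇.neg).dsum (refl _)).dsum (refl _)

/-- The chain of primitive isometric embeddings `L ↪ L' ↪ L'' ↪ L'''` of even
lattices of ranks 16, 17, 18, 19. -/
theorem lattice_polarization_extension_chain :
    PrimitiveIsometricEmbedding GramL GramL' ∧
    PrimitiveIsometricEmbedding GramL' GramL'' ∧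
    PrimitiveIsometricEmbedding GramL'' GramL''' :=
  ⟨splitIsometricEmbedding_gramL_gramL'.primitiveIsometricEmbedding,
    splitIsometricEmbedding_gramL'_gramL''.primitiveIsometricEmbedding,
    splitIsometricEmbedding_gramL''_gramL'''.primitiveIsometricEmbedding⟩
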